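/- (IWAE gradient identity, finite case) Let Z be finite, q a fixed distribution on Z with full support, and π_θ(z), r_θ(z) differentiable positive functions of a parameter θ ∈ ℝ. For i.i.d. Z₁,…,Z_K ~ q and weights ρ_k = r_θ(Z_k)π_θ(Z_k)/q(Z_k), define normalized weights ρ̃_k = ρ_k / Σ_j ρ_j. Then d/dθ E[log((1/K)Σ_k ρ_k)] = E[Σ_{k=1}^K ρ̃_k · d/dθ log(r_θ(Z_k)π_θ(Z_k))]. -/

import Mathlib

/-!
Differentiating `log (c * ∑ᵢ wᵢ)` gives `∑ᵢ wᵢ' / ∑ⱼ wⱼ`, and writing `wᵢ' = wᵢ · (log wᵢ)'` turns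
this into the self-normalized average of the score functions `(log wᵢ)'`. Since `q` does not depend
on `θ`, the score of the importance weight `r π / q` is that of `r π`, and the expectation over
`Z₁, …, Z_K` is a finite sum with `θ`-independent coefficients, so it commutes with `d/dθ`.
-/

open Finset

theorem hasDerivAt_log_const_mul_sum {ι : Type*} {s : Finset ι} {w : ι → ℝ → ℝ} {c x : ℝ}
    (hc : c ≠ 0) (hw : ∀ i ∈ s, DifferentiableAt ℝ (w i) x) (hw0 : ∀ i ∈ s, w i x ≠ 0)
    (hsum : ∑ i ∈ s, w i x ≠ 0) :
    HasDerivAt (fun θ => Real.log (c * ∑ i ∈ s, w i θ))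
      (∑ i ∈ s, w i x / (∑ j ∈ s, w j x) * logDeriv (w i) x) x := by
  have hderiv := ((HasDerivAt.fun_sum fun i hi => (hw i hi).hasDerivAt).const_mul c).log
    (mul_ne_zero hc hsum)
  convert hderiv using 1
  rw [mul_div_mul_left _ _ hc, sum_div]
  refine sum_congr rfl fun i hi => ?_
  rw [logDeriv_apply]
  field_simp [hw0 i hi]

theorem logDeriv_div_const {f : ℝ → ℝ} (x a : ℝ) (ha : a ≠ 0) :
    logDeriv (fun θ => f θ / a) x = logDeriv f x := by
  simp_rw [div_eq_mul_inv]
  exact logDeriv_mul_const x _ (inv_ne_zero ha)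

theorem iwae_gradient_identity_general {Z : Type*} [Fintype Z]
    (q : Z → ℝ) (hq0 : ∀ z, 0 < q z)
    (π r : ℝ → Z → ℝ)
    (hπpos : ∀ θ z, 0 < π θ z) (hrpos : ∀ θ z, 0 < r θ z)
    (hπdiff : ∀ z, Differentiable ℝ (fun θ => π θ z))
    (hrdiff : ∀ z, Differentiable ℝ (fun θ => r θ z))
    (K : ℕ) (hK : 1 ≤ K) (θ₀ : ℝ) :
    deriv (fun θ => ∑ f : Fin K → Z, (∏ i, q (f i)) *
        Real.log ((1 / (K : ℝ)) * ∑ k, r θ (f k) * π θ (f k) / q (f k))) θ₀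
      = ∑ f : Fin K → Z, (∏ i, q (f i)) *
          ∑ k : Fin K,
            ((r θ₀ (f k) * π θ₀ (f k) / q (f k)) /
                (∑ j, r θ₀ (f j) * π θ₀ (f j) / q (f j))) *
              deriv (fun θ => Real.log (r θ (f k) * π θ (f k))) θ₀ := by
  have hrπ (z : Z) : Differentiable ℝ (fun θ => r θ z * π θ z) := (hrdiff z).mul (hπdiff z)
  have hweight (θ : ℝ) (z : Z) : 0 < r θ z * π θ z / q z :=
    div_pos (mul_pos (hrpos θ z) (hπpos θ z)) (hq0 z)
  have hscore (f : Fin K → Z) (k : Fin K) :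
      logDeriv (fun θ => r θ (f k) * π θ (f k) / q (f k)) θ₀
        = deriv (fun θ => Real.log (r θ (f k) * π θ (f k))) θ₀ := by
    rw [logDeriv_div_const _ _ (hq0 (f k)).ne',
      ← Real.deriv_log_comp_eq_logDeriv (hrπ (f k) θ₀)
        (mul_pos (hrpos θ₀ (f k)) (hπpos θ₀ (f k))).ne']
    rfl
  have hlog (f : Fin K → Z) := hasDerivAt_log_const_mul_sum (s := univ) (x := θ₀)
    (w := fun k θ => r θ (f k) * π θ (f k) / q (f k))
    (one_div_ne_zero (Nat.cast_ne_zero.mpr (Nat.one_le_iff_ne_zero.mp hK)))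
    (fun k _ => (hrπ (f k) θ₀).div_const _) (fun k _ => (hweight θ₀ (f k)).ne')
    (sum_pos (fun k _ => hweight θ₀ (f k)) ⟨⟨0, hK⟩, mem_univ _⟩).ne'
  refine (HasDerivAt.fun_sum fun f _ => (hlog f).const_mul (∏ i, q (f i))).deriv.trans ?_
  simp only [hscore]

/-- IWAE gradient identity (finite case): for a fixed full-support sampling
distribution `q` and positive differentiable families `π θ`, `r θ`, the
derivative of the `K`-sample IWAE bound equals the expectation of the
self-normalized weighted sum of per-trace score gradients. -/
theorem iwae_gradient_identity {Z : Type*} [Fintype Z]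
    (q : Z → ℝ) (hq0 : ∀ z, 0 < q z) (hq1 : ∑ z, q z = 1)
    (π r : ℝ → Z → ℝ)
    (hπpos : ∀ θ z, 0 < π θ z) (hrpos : ∀ θ z, 0 < r θ z)
    (hπdiff : ∀ z, Differentiable ℝ (fun θ => π θ z))
    (hrdiff : ∀ z, Differentiable ℝ (fun θ => r θ z))
    (K : ℕ) (hK : 1 ≤ K) (θ₀ : ℝ) :
    deriv (fun θ => ∑ f : Fin K → Z, (∏ i, q (f i)) *
        Real.log ((1 / (K : ℝ)) * ∑ k, r θ (f k) * π θ (f k) / q (f k))) θ₀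
      = ∑ f : Fin K → Z, (∏ i, q (f i)) *
          ∑ k : Fin K,
            ((r θ₀ (f k) * π θ₀ (f k) / q (f k)) /
                (∑ j, r θ₀ (f j) * π θ₀ (f j) / q (f j))) *
              deriv (fun θ => Real.log (r θ (f k) * π θ (f k))) θ₀ :=
  iwae_gradient_identity_general q hq0 π r hπpos hrpos hπdiff hrdiff K hK θ₀
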